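/- If f in the Pick class satisfies f(z) = a^0 + o(z-x) as z → x nontangentially for some x ∈ ℝ and a^0 ∈ ℝ (i.e. f has nontangential limit a^0 and angular derivative 0 at x), then f is the constant function a^0. -/

import Mathlib

open Complex Filter Finset Metric Set

noncomputable section

/-- The open upper half-plane. -/
def UHP : Set ℂ := {z : ℂ | 0 < z.im}

/-- The Pick class: analytic functions on the upper half-plane with nonnegative
imaginary part there. -/
def IsPick (f : ℂ → ℂ) : Prop :=
  DifferentiableOn ℂ f UHP ∧ ∀ z ∈ UHP, 0 ≤ (f z).im

/-- A nontangential approach region at `x ∈ ℝ` with aperture `K`. -/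
def ntRegion (x K : ℝ) : Set ℂ := {z : ℂ | 0 < z.im ∧ ‖z - x‖ ≤ K * z.im}

/-- `f z → L` as `z → x` nontangentially in the upper half-plane. -/
def NTTendsto (f : ℂ → ℂ) (x : ℝ) (L : ℂ) : Prop :=
  ∀ K > 0, Tendsto f (nhdsWithin (x : ℂ) (ntRegion x K)) (nhds L)

/-- `r z = o((z-x)^n)` as `z → x` nontangentially. -/
def NTLittleO (r : ℂ → ℂ) (x : ℝ) (n : ℕ) : Prop :=
  NTTendsto (fun z => r z / (z - (x : ℂ)) ^ n) x 0

/-- `f` has the pseudo-Taylor expansion of order `n` about `x` with coefficients `c`. -/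
def HasPseudoTaylor (f : ℂ → ℂ) (x : ℝ) (n : ℕ) (c : ℕ → ℂ) : Prop :=
  NTLittleO (fun z => f z - ∑ j ∈ Finset.range (n + 1), c j * (z - (x : ℂ)) ^ j) x n

/-!
If `f` is not constant, the open mapping theorem puts its values in the open upper half-plane,
and the Schwarz–Pick lemma then bounds `Im f` from below along the vertical ray at `x`:
`Im f(x + iy) ≥ y · Im f(x + i)` for `0 < y ≤ 1`. But `Im f(x + iy) / y` is the real part of
`(f(x + iy) - a₀) / (iy)`, which tends to `0` by hypothesis. So `f` is constant, and the constant
is its nontangential limit `a₀`.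
-/

open ComplexConjugate Topology

lemma isOpen_UHP : IsOpen UHP := isOpen_lt continuous_const continuous_im

lemma isPreconnected_UHP : IsPreconnected UHP := (convex_halfSpace_im_gt 0).isPreconnected

lemma norm_sub_conj_sq_sub_norm_sub_sq (z w : ℂ) :
    ‖z - conj w‖ ^ 2 - ‖z - w‖ ^ 2 = 4 * z.im * w.im := by
  simp only [Complex.sq_norm, normSq_apply, sub_re, sub_im, conj_re, conj_im]
  ring

lemma sub_conj_ne_zero {z w : ℂ} (hz : 0 < z.im) (hw : 0 < w.im) : z - conj w ≠ 0 := fun h => by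
  have := congrArg im h
  rw [sub_im, conj_im, zero_im] at this
  linarith

lemma norm_sub_lt_norm_sub_conj {z w : ℂ} (hz : 0 < z.im) (hw : 0 < w.im) :
    ‖z - w‖ < ‖z - conj w‖ := by
  have := norm_sub_conj_sq_sub_norm_sub_sq z w
  nlinarith [norm_nonneg (z - w), norm_nonneg (z - conj w), mul_pos hz hw]

lemma im_add_im_le_norm_sub_conj (z w : ℂ) : z.im + w.im ≤ ‖z - conj w‖ := by
  simpa using (le_abs_self _).trans (abs_im_le_norm (z - conj w))

lemma one_sub_mul_im_le_one_add_mul_im {z w : ℂ} {r : ℝ} (hz : 0 < z.im) (hw : 0 < w.im)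
    (hzw : ‖z - w‖ ≤ r * ‖z - conj w‖) : (1 - r) * w.im ≤ (1 + r) * z.im := by
  have hd : 0 < ‖z - conj w‖ := (norm_nonneg _).trans_lt (norm_sub_lt_norm_sub_conj hz hw)
  have hr : 0 ≤ r := nonneg_of_mul_nonneg_left ((norm_nonneg _).trans hzw) hd
  rcases le_or_gt 1 r with h1 | h1
  · nlinarith
  have hsq : ‖z - conj w‖ ^ 2 * (1 - r ^ 2) ≤ 4 * z.im * w.im := by
    nlinarith [norm_sub_conj_sq_sub_norm_sub_sq z w, norm_nonneg (z - w)]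
  have hsum : (z.im + w.im) ^ 2 * (1 - r ^ 2) ≤ 4 * z.im * w.im := by
    have hle := pow_le_pow_left₀ (by linarith) (im_add_im_le_norm_sub_conj z w) 2
    nlinarith [mul_le_mul_of_nonneg_right hle (by nlinarith : (0:ℝ) ≤ 1 - r ^ 2)]
  by_contra! hlt
  -- `(1 - r²)(a + b)² - 4ab = ((1 - r) b - (1 + r) a) ((1 + r) b - (1 - r) a)`
  nlinarith [mul_pos (sub_pos.2 hlt) (by nlinarith : 0 < (1 + r) * w.im - (1 - r) * z.im)]

def discToUHP (w u : ℂ) : ℂ := (w - u * conj w) / (1 - u)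

lemma discToUHP_zero (w : ℂ) : discToUHP w 0 = w := by simp [discToUHP]

lemma one_sub_ne_zero_of_mem_ball {u : ℂ} (hu : u ∈ ball (0 : ℂ) 1) : 1 - u ≠ 0 := by
  rintro h
  rw [sub_eq_zero.1 h |>.symm] at hu
  simp at hu

lemma discToUHP_mem_UHP {w u : ℂ} (hw : w ∈ UHP) (hu : u ∈ ball (0 : ℂ) 1) :
    discToUHP w u ∈ UHP := by
  have hnorm : normSq u < 1 := by
    rw [mem_ball_zero_iff] at hu
    rw [← Complex.sq_norm]; nlinarith [norm_nonneg u]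
  have hden : 0 < normSq (1 - u) := normSq_pos.2 (one_sub_ne_zero_of_mem_ball hu)
  have him : (discToUHP w u).im = w.im * (1 - normSq u) / normSq (1 - u) := by
    simp only [discToUHP, div_im, sub_re, sub_im, mul_re, mul_im, conj_re, conj_im, one_re,
      one_im, normSq_apply]
    ring
  change 0 < (discToUHP w u).im
  rw [him]
  exact div_pos (mul_pos hw (by linarith)) hden

lemma differentiableOn_discToUHP (w : ℂ) : DifferentiableOn ℂ (discToUHP w) (ball 0 1) :=
  ((differentiableOn_const w).sub (differentiableOn_id.mul_const _)).div
    ((differentiableOn_const 1).sub differentiableOn_id) fun _ hu =>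
      one_sub_ne_zero_of_mem_ball hu

lemma discToUHP_div_sub_conj {z w : ℂ} (hz : z ∈ UHP) (hw : w ∈ UHP) :
    discToUHP w ((z - w) / (z - conj w)) = z := by
  have hzw := sub_conj_ne_zero hz hw
  have hww := sub_conj_ne_zero hw hw
  calc discToUHP w ((z - w) / (z - conj w))
      = (z * (w - conj w) / (z - conj w)) / ((w - conj w) / (z - conj w)) := by
        rw [discToUHP]; congr 1 <;> field_simp <;> ring
    _ = z := by field_simp

lemma norm_sub_div_sub_conj_lt_one {z w : ℂ} (hz : z ∈ UHP) (hw : w ∈ UHP) :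
    ‖(z - w) / (z - conj w)‖ < 1 := by
  have h := norm_sub_lt_norm_sub_conj hz hw
  rw [norm_div]
  exact (div_lt_one ((norm_nonneg _).trans_lt h)).2 h

theorem schwarzPick_UHP {g : ℂ → ℂ} (hg : DifferentiableOn ℂ g UHP) (hgU : MapsTo g UHP UHP)
    {z w : ℂ} (hz : z ∈ UHP) (hw : w ∈ UHP) :
    ‖g z - g w‖ / ‖g z - conj (g w)‖ ≤ ‖z - w‖ / ‖z - conj w‖ := by
  set h : ℂ → ℂ := fun u => (g (discToUHP w u) - g w) / (g (discToUHP w u) - conj (g w))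
  have hmaps : MapsTo h (ball 0 1) (closedBall 0 1) := fun u hu =>
    mem_closedBall_zero_iff.2
      (norm_sub_div_sub_conj_lt_one (hgU (discToUHP_mem_UHP hw hu)) (hgU hw)).le
  have hd : DifferentiableOn ℂ h (ball 0 1) := by
    have hgc := hg.comp (differentiableOn_discToUHP w) fun u hu => discToUHP_mem_UHP hw hu
    exact (hgc.sub_const _).div (hgc.sub_const _) fun u hu =>
      sub_conj_ne_zero (hgU (discToUHP_mem_UHP hw hu)) (hgU hw)
  have hschwarz := Complex.norm_le_norm_of_mapsTo_ball hd hmaps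
    (by simp [h, discToUHP_zero]) (norm_sub_div_sub_conj_lt_one hz hw)
  simpa only [h, discToUHP_div_sub_conj hz hw, norm_div] using hschwarz

lemma mul_im_le_im_vertical {g : ℂ → ℂ} (hg : DifferentiableOn ℂ g UHP)
    (hgU : MapsTo g UHP UHP) (x : ℝ) {y : ℝ} (hy : 0 < y) (hy1 : y ≤ 1) :
    y * (g (x + I)).im ≤ (g (x + y * I)).im := by
  have hz : (x + y * I : ℂ) ∈ UHP := by simp [UHP, hy]
  have hw : (x + I : ℂ) ∈ UHP := by simp [UHP]
  have hdist : ‖(x + y * I : ℂ) - (x + I)‖ / ‖(x + y * I : ℂ) - conj (x + I)‖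
      = (1 - y) / (1 + y) := by
    have e1 : (x + y * I : ℂ) - (x + I) = ((y - 1 : ℝ) : ℂ) * I := by push_cast; ring
    have e2 : (x + y * I : ℂ) - conj (x + I) = ((y + 1 : ℝ) : ℂ) * I := by
      simp only [map_add, conj_ofReal, conj_I]; push_cast; ring
    rw [e1, e2, norm_mul, norm_mul, norm_I, norm_real, norm_real, Real.norm_eq_abs,
      Real.norm_eq_abs, abs_of_nonpos (by linarith), abs_of_pos (by linarith)]
    ring
  have hsp := schwarzPick_UHP hg hgU hz hw
  rw [hdist, div_le_iff₀ ((norm_nonneg _).trans_lt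
    (norm_sub_lt_norm_sub_conj (hgU hz) (hgU hw)))] at hsp
  have key := one_sub_mul_im_le_one_add_mul_im (hgU hz) (hgU hw) hsp
  have h1y : (0 : ℝ) < 1 + y := by linarith
  rw [one_sub_div h1y.ne', one_add_div h1y.ne', div_mul_eq_mul_div, div_mul_eq_mul_div,
    div_le_div_iff_of_pos_right h1y] at key
  linarith

lemma IsPick.eq_const_or_mapsTo {f : ℂ → ℂ} (hf : IsPick f) :
    (∃ w, ∀ z ∈ UHP, f z = w) ∨ MapsTo f UHP UHP := by
  refine ((hf.1.analyticOnNhd isOpen_UHP).is_constant_or_isOpen isPreconnected_UHP).imp_right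
    fun hopen z hz => (hf.2 z hz).lt_of_ne' fun h0 => ?_
  -- an open set of values containing the real number `f z` would reach into the lower half-plane
  have himage : IsOpen (im '' (f '' UHP)) := isOpenMap_im _ (hopen UHP subset_rfl isOpen_UHP)
  have hIci : Ici (0 : ℝ) ∈ 𝓝 0 :=
    mem_of_superset (himage.mem_nhds ⟨f z, mem_image_of_mem f hz, h0⟩)
    (by rintro _ ⟨_, ⟨w, hw, rfl⟩, rfl⟩; exact hf.2 w hw)
  have h0int := mem_interior_iff_mem_nhds.2 hIci
  rw [interior_Ici] at h0int
  exact lt_irrefl (0 : ℝ) h0int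

lemma tendsto_vertical_ntRegion (x : ℝ) {K : ℝ} (hK : 1 ≤ K) :
    Tendsto (fun y : ℝ => (x + y * I : ℂ)) (𝓝[>] 0) (𝓝[ntRegion x K] x) := by
  refine tendsto_nhdsWithin_iff.2 ⟨?_, ?_⟩
  · have hcont : Continuous fun y : ℝ => (x + y * I : ℂ) := by fun_prop
    simpa using (hcont.tendsto 0).mono_left nhdsWithin_le_nhds
  · filter_upwards [self_mem_nhdsWithin] with y (hy : 0 < y)
    refine ⟨by simpa using hy, ?_⟩
    simpa [abs_of_pos hy] using le_mul_of_one_le_left hy.le hK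

lemma NTTendsto.tendsto_vertical {f : ℂ → ℂ} {x : ℝ} {L : ℂ} (h : NTTendsto f x L) :
    Tendsto (fun y : ℝ => f (x + y * I)) (𝓝[>] 0) (𝓝 L) :=
  (h 1 one_pos).comp (tendsto_vertical_ntRegion x le_rfl)

lemma NTLittleO.ntTendsto_zero {r : ℂ → ℂ} {x : ℝ} {n : ℕ} (h : NTLittleO r x n) :
    NTTendsto r x 0 := by
  intro K hK
  have hpow : Tendsto (fun z : ℂ => (z - x) ^ n) (𝓝[ntRegion x K] x) (𝓝 ((x - x : ℂ) ^ n)) :=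
    (((continuous_id.sub continuous_const).pow n).tendsto (x : ℂ)).mono_left nhdsWithin_le_nhds
  have hprod := hpow.mul (h K hK)
  rw [mul_zero] at hprod
  refine hprod.congr' ?_
  filter_upwards [self_mem_nhdsWithin] with z ⟨hz, _⟩
  have hzx : z - x ≠ 0 := sub_ne_zero.2 fun hzx => by simp [hzx] at hz
  exact mul_div_cancel₀ _ (pow_ne_zero n hzx)

lemma re_sub_ofReal_div_ofReal_mul_I (v : ℂ) (a y : ℝ) : ((v - a) / (y * I)).re = v.im / y := by
  rw [mul_comm, ← div_div, div_I, div_ofReal_re]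
  simp

theorem zero_angular_derivative_implies_constant (f : ℂ → ℂ) (x a₀ : ℝ)
    (hf : IsPick f)
    (hlo : NTLittleO (fun z => f z - (a₀ : ℂ)) x 1) :
    ∀ z ∈ UHP, f z = (a₀ : ℂ) := by
  rcases hf.eq_const_or_mapsTo with ⟨w, hw⟩ | hUHP
  · have hlim := hlo.ntTendsto_zero.tendsto_vertical
    have hwa : w - a₀ = 0 := tendsto_const_nhds_iff.1 <| hlim.congr' <| by
      filter_upwards [self_mem_nhdsWithin] with y (hy : 0 < y)
      rw [hw _ (by simpa [UHP] using hy)]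
    intro z hz
    rw [hw z hz, ← sub_eq_zero, hwa]
  · exfalso
    have hquot : Tendsto (fun y : ℝ => (f (x + y * I)).im / y) (𝓝[>] 0) (𝓝 0) := by
      simpa [Function.comp_def, re_sub_ofReal_div_ofReal_mul_I] using
        (continuous_re.tendsto 0).comp hlo.tendsto_vertical
    have hbound : ∀ᶠ y : ℝ in 𝓝[>] 0, (f (x + I)).im ≤ (f (x + y * I)).im / y := by
      filter_upwards [Ioc_mem_nhdsGT one_pos] with y ⟨hy, hy1⟩
      rw [le_div_iff₀ hy, mul_comm]
      exact mul_im_le_im_vertical hf.1 hUHP x hy hy1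
    exact (hUHP (by simp [UHP] : (x + I : ℂ) ∈ UHP)).out.not_ge (ge_of_tendsto hquot hbound)
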